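/- If T is a finite tree of order n ≥ 4 with exactly 3 leaves, then pd(T) = 3. -/

import Mathlib

open SimpleGraph

variable {V : Type*}

/-- Distance from a vertex to a set of vertices: `min_{u ∈ P} d(v,u)`. -/
noncomputable def distSet (G : SimpleGraph V) (v : V) (P : Set V) : ℕ :=
  sInf ((G.dist v) '' P)

/-- An ordered partition of `V` into `t` (nonempty) classes, encoded by a surjective
map `c : V → Fin t`, is resolving if distinct vertices have distinct partition
representations, i.e. distinct vectors of distances to the classes. -/
def IsResolvingPartition (G : SimpleGraph V) {t : ℕ} (c : V → Fin t) : Prop :=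
  Function.Surjective c ∧
    ∀ u v : V, (∀ i : Fin t, distSet G u {x | c x = i} = distSet G v {x | c x = i}) → u = v

/-- The partition dimension: the least `t` admitting a resolving partition into `t` classes. -/
noncomputable def partitionDim (G : SimpleGraph V) : ℕ :=
  sInf {t : ℕ | ∃ c : V → Fin t, IsResolvingPartition G c}

/-- A set `S` is a resolving set if distinct vertices have distinct vectors of
distances to the elements of `S`. -/
def IsResolvingSet (G : SimpleGraph V) (S : Set V) : Prop :=
  ∀ u v : V, (∀ w ∈ S, G.dist u w = G.dist v w) → u = v

/-- The metric dimension: the least cardinality of a resolving set. -/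
noncomputable def metricDim (G : SimpleGraph V) : ℕ :=
  sInf {k : ℕ | ∃ S : Set V, S.ncard = k ∧ IsResolvingSet G S}

/-- A leaf is a vertex of degree one. -/
def IsLeaf (G : SimpleGraph V) (v : V) : Prop := (G.neighborSet v).ncard = 1

/-- A major vertex is a vertex of degree at least three. -/
def IsMajor (G : SimpleGraph V) (v : V) : Prop := 3 ≤ (G.neighborSet v).ncard

/-- A path graph: a tree in which every vertex has degree at most two. -/
def IsPathGraph (G : SimpleGraph V) : Prop :=
  G.IsTree ∧ ∀ v : V, (G.neighborSet v).ncard ≤ 2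

/-- `u` is a terminal vertex of the major vertex `v` if `u` is a leaf and
`d(u,v) < d(u,w)` for every other major vertex `w`. -/
def IsTerminalOf (G : SimpleGraph V) (u v : V) : Prop :=
  IsLeaf G u ∧ IsMajor G v ∧ ∀ w : V, IsMajor G w → w ≠ v → G.dist u v < G.dist u w

/-- The terminal degree of a vertex: its number of terminal vertices. -/
noncomputable def terminalDegree (G : SimpleGraph V) (v : V) : ℕ :=
  {u | IsTerminalOf G u v}.ncard

/-- An exterior major vertex: a major vertex with positive terminal degree. -/
def IsExteriorMajor (G : SimpleGraph V) (v : V) : Prop :=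
  IsMajor G v ∧ 0 < terminalDegree G v

/-- `n₁(G)`: the number of leaves. -/
noncomputable def numLeaves (G : SimpleGraph V) : ℕ := {v | IsLeaf G v}.ncard

/-- `ex(G)`: the number of exterior major vertices. -/
noncomputable def numExteriorMajor (G : SimpleGraph V) : ℕ := {v | IsExteriorMajor G v}.ncard

/-- A support vertex: a vertex adjacent to a leaf. -/
def IsSupport (G : SimpleGraph V) (v : V) : Prop := ∃ u, G.Adj v u ∧ IsLeaf G u

/-- `ξ(G)`: the number of support vertices. -/
noncomputable def numSupport (G : SimpleGraph V) : ℕ := {v | IsSupport G v}.ncard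

/-- `θ(G)`: the maximum number of leaves adjacent to a single support vertex. -/
noncomputable def maxLeavesAtSupport (G : SimpleGraph V) : ℕ :=
  sSup {n : ℕ | ∃ v, IsSupport G v ∧ n = {u | G.Adj v u ∧ IsLeaf G u}.ncard}

/-!
A resolving partition `{A, B}` with `w ∈ A` forces `deg w ≤ 2`: the distance to `B` separates
the neighbours of `w` (within `A` by resolvability, and it vanishes on `B`), yet it only takes the
values `d(w, B) ± 1` there. So `pd(T) ≥ 3` as soon as `T` has a vertex of degree at least three,
which the handshake lemma provides when `T` has three leaves.

Conversely, every branch of `T` at such a vertex `w` contains a leaf, so `w` has exactly three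
branches, one for each leaf. Every vertex then lies on the geodesic from `w` to one leaf and
reaches the other leaves through `w`; hence two leaves `x, y` already resolve `T`, and
`{x}, {y}, V ∖ {x, y}` is a resolving partition.
-/

section PartitionDimension

variable {G : SimpleGraph V} {u v w : V} {P : Set V}

lemma distSet_singleton (v x : V) : distSet G v {x} = G.dist v x := by
  simp [distSet]

lemma distSet_eq_zero_of_mem (h : v ∈ P) : distSet G v P = 0 :=
  Nat.eq_zero_of_le_zero (Nat.sInf_le ⟨v, h, G.dist_self⟩)

lemma distSet_le_dist (h : u ∈ P) : distSet G v P ≤ G.dist v u :=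
  Nat.sInf_le ⟨u, h, rfl⟩

lemma exists_mem_dist_eq_distSet (hP : P.Nonempty) (v : V) :
    ∃ u ∈ P, G.dist v u = distSet G v P :=
  Nat.sInf_mem (hP.image (G.dist v))

lemma SimpleGraph.Connected.distSet_pos (hG : G.Connected) (hP : P.Nonempty) (hv : v ∉ P) :
    0 < distSet G v P := by
  obtain ⟨u, hu, huv⟩ := exists_mem_dist_eq_distSet (G := G) hP v
  exact huv ▸ hG.pos_dist_of_ne fun h => hv (h ▸ hu)

lemma SimpleGraph.Connected.distSet_le_dist_add (hG : G.Connected) (hP : P.Nonempty) (u v : V) :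
    distSet G u P ≤ G.dist u v + distSet G v P := by
  obtain ⟨p, hp, hvp⟩ := exists_mem_dist_eq_distSet (G := G) hP v
  calc distSet G u P ≤ G.dist u p := distSet_le_dist hp
    _ ≤ G.dist u v + G.dist v p := hG.dist_triangle
    _ = G.dist u v + distSet G v P := by rw [hvp]

lemma IsResolvingPartition.eq_of_forall_ne {t : ℕ} {c : V → Fin t}
    (hc : IsResolvingPartition G c) (huv : c u = c v)
    (h : ∀ i ≠ c u, distSet G u {x | c x = i} = distSet G v {x | c x = i}) : u = v := by
  refine hc.2 u v fun i => ?_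
  by_cases hi : i = c u
  · rw [distSet_eq_zero_of_mem (show u ∈ {x | c x = i} from hi.symm),
      distSet_eq_zero_of_mem (show v ∈ {x | c x = i} from (hi.trans huv).symm)]
  · exact h i hi

theorem ncard_neighborSet_le_two_of_isResolvingPartition (hG : G.Connected) {c : V → Fin 2}
    (hc : IsResolvingPartition G c) (w : V) : (G.neighborSet w).ncard ≤ 2 := by
  have fin_two : ∀ a b : Fin 2, a ≠ b → ∀ i, i ≠ a → i = b := by decide
  obtain ⟨j, hj⟩ : ∃ j, j ≠ c w := (by decide : ∀ a : Fin 2, ∃ b, b ≠ a) (c w)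
  set P := {x | c x = j}
  have hP : P.Nonempty := hc.1 j
  set φ := fun x => distSet G x P
  have hφw : 0 < φ w := hG.distSet_pos hP hj.symm
  have hφP : ∀ t, c t = j → φ t = 0 := fun t ht => distSet_eq_zero_of_mem ht
  have hφ_pos : ∀ t, c t = c w → 0 < φ t := fun t ht =>
    hG.distSet_pos hP (ht.trans_ne hj.symm)
  have near : ∀ t ∈ G.neighborSet w, φ t + 1 = φ w ∨ φ t = φ w + 1 := by
    intro t (ht : G.Adj w t)
    have h₁ : φ t ≤ 1 + φ w := dist_eq_one_iff_adj.2 ht.symm ▸ hG.distSet_le_dist_add hP t w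
    have h₂ : φ w ≤ 1 + φ t := dist_eq_one_iff_adj.2 ht ▸ hG.distSet_le_dist_add hP w t
    have h₃ : φ t ≠ φ w := by
      intro h
      by_cases htw : c t = c w
      · exact ht.ne (hc.eq_of_forall_ne htw fun i hi => by
          rw [fin_two _ _ hj.symm i (htw ▸ hi)]; exact h).symm
      · rw [hφP t (fin_two _ _ hj.symm _ htw)] at h; omega
    omega
  have inj : Set.InjOn φ (G.neighborSet w) := by
    have hA : ∀ t, G.Adj w t → c t = j → distSet G t {x | c x = c w} = 1 := fun t ht htj =>
      le_antisymm (dist_eq_one_iff_adj.2 ht.symm ▸ distSet_le_dist rfl)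
        (hG.distSet_pos ⟨w, rfl⟩ (htj.trans_ne hj))
    intro t (ht : G.Adj w t) t' (ht' : G.Adj w t') h
    by_cases htw : c t = c w <;> by_cases htw' : c t' = c w
    · exact hc.eq_of_forall_ne (htw.trans htw'.symm) fun i hi => by
        rw [fin_two _ _ hj.symm i (htw ▸ hi)]; exact h
    · have := hφ_pos t htw; rw [h, hφP t' (fin_two _ _ hj.symm _ htw')] at this; omega
    · have := hφ_pos t' htw'; rw [← h, hφP t (fin_two _ _ hj.symm _ htw)] at this; omega
    · have htj := fin_two _ _ hj.symm _ htw
      have htj' := fin_two _ _ hj.symm _ htw'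
      refine hc.eq_of_forall_ne (htj.trans htj'.symm) fun i hi => ?_
      rw [fin_two _ _ hj i (htj ▸ hi), hA t ht htj, hA t' ht' htj']
  calc (G.neighborSet w).ncard ≤ ({φ w - 1, φ w + 1} : Set ℕ).ncard :=
        Set.ncard_le_ncard_of_injOn φ (fun t ht => by
          rcases near t ht with h | h <;> simp [← h]) inj
    _ ≤ 2 := (Set.ncard_insert_le _ _).trans (by simp)

theorem three_le_of_isResolvingPartition (hG : G.Connected) (hw : IsMajor G w) {t : ℕ}
    {c : V → Fin t} (hc : IsResolvingPartition G c) : 3 ≤ t := by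
  have hw : 3 ≤ (G.neighborSet w).ncard := hw
  obtain ⟨s, hs⟩ : (G.neighborSet w).Nonempty := Set.nonempty_of_ncard_ne_zero (by omega)
  match t, c, hc with
  | 0, c, _ => exact (c w).elim0
  | 1, c, hc => exact absurd (hc.eq_of_forall_ne (Subsingleton.elim _ _) fun i hi =>
      absurd (Subsingleton.elim _ _) hi) (G.ne_of_adj hs)
  | 2, c, hc => exact absurd (ncard_neighborSet_le_two_of_isResolvingPartition hG hc w) (by omega)
  | t + 3, _, _ => omega

lemma IsResolvingSet.exists_isResolvingPartition_fin_three {x y z : V}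
    (h : IsResolvingSet G {x, y}) (hxy : x ≠ y) (hzx : z ≠ x) (hzy : z ≠ y) :
    ∃ c : V → Fin 3, IsResolvingPartition G c := by
  classical
  let c : V → Fin 3 := fun v => if v = x then 0 else if v = y then 1 else 2
  have hc₀ : {v | c v = 0} = {x} := by ext v; by_cases v = x <;> by_cases v = y <;> simp [c, *]
  have hc₁ : {v | c v = 1} = {y} := by
    ext v; by_cases v = x <;> by_cases v = y <;> simp [c, hxy.symm, *]
  refine ⟨c, fun i => ?_, fun u v huv => h u v ?_⟩
  · fin_cases i
    exacts [⟨x, by simp [c]⟩, ⟨y, by simp [c, hxy.symm]⟩, ⟨z, by simp [c, hzx, hzy]⟩]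
  · rintro a (rfl | rfl)
    · simpa only [hc₀, distSet_singleton] using huv 0
    · simpa only [hc₁, distSet_singleton] using huv 1

end PartitionDimension

section Trees

variable {G : SimpleGraph V} {u v w s l : V}

lemma SimpleGraph.Walk.dist_add_dist_of_mem_support {p : G.Walk u v}
    (hp : p.length = G.dist u v) (hw : w ∈ p.support) :
    G.dist u w + G.dist w v = G.dist u v := by
  classical
  rw [← length_eq_dist_of_subwalk hp (p.isSubwalk_takeUntil hw),
    ← length_eq_dist_of_subwalk hp (p.isSubwalk_dropUntil hw), ← hp, ← Walk.length_append,
    Walk.take_spec]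

/-- In a tree, `s` names the branch at `w` that contains `v`. -/
def IsFirstStep (G : SimpleGraph V) (w v s : V) : Prop :=
  G.Adj w s ∧ G.dist s v + 1 = G.dist w v

lemma SimpleGraph.Connected.exists_isFirstStep (hG : G.Connected) (h : v ≠ w) :
    ∃ s, IsFirstStep G w v s := by
  obtain ⟨p, hp⟩ := hG.exists_walk_length_eq_dist w v
  cases p with
  | nil => exact absurd rfl h
  | @cons _ t _ ha q =>
    refine ⟨t, ha, ?_⟩
    have h₁ := dist_le q
    have h₂ : G.dist w v ≤ G.dist w t + G.dist t v := hG.dist_triangle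
    rw [Walk.length_cons] at hp
    rw [dist_eq_one_iff_adj.2 ha] at h₂
    omega

lemma IsFirstStep.of_dist_add_dist_eq (hG : G.Connected) (h : IsFirstStep G w v s)
    (hl : G.dist w v + G.dist v l = G.dist w l) : IsFirstStep G w l s := by
  refine ⟨h.1, le_antisymm ?_ ?_⟩
  · have : G.dist s l ≤ G.dist s v + G.dist v l := hG.dist_triangle
    have := h.2
    omega
  · have : G.dist w l ≤ G.dist w s + G.dist s l := hG.dist_triangle
    rw [dist_eq_one_iff_adj.2 h.1] at this
    omega

lemma SimpleGraph.IsTree.isFirstStep_unique (hT : G.IsTree) {s₁ s₂ : V}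
    (h₁ : IsFirstStep G w v s₁) (h₂ : IsFirstStep G w v s₂) : s₁ = s₂ := by
  have geodesic_cons : ∀ s, IsFirstStep G w v s →
      ∃ p : G.Walk w v, p.IsPath ∧ p.snd = s := by
    intro s hs
    obtain ⟨q, hq⟩ := hT.connected.exists_walk_length_eq_dist s v
    refine ⟨.cons hs.1 q, Walk.isPath_of_length_eq_dist _ ?_, Walk.snd_cons _ _⟩
    rw [Walk.length_cons, hq, hs.2]
  obtain ⟨p₁, hp₁, rfl⟩ := geodesic_cons s₁ h₁
  obtain ⟨p₂, hp₂, rfl⟩ := geodesic_cons s₂ h₂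
  rw [(hT.existsUnique_path w v).unique hp₁ hp₂]

lemma SimpleGraph.IsTree.isFirstStep_eq_of_adj (hT : G.IsTree) {a b s' : V} (hab : G.Adj a b)
    (ha : IsFirstStep G w a s) (hb : IsFirstStep G w b s') : s = s' := by
  rcases hT.dist_eq_dist_add_one_of_adj w hab with h | h
  · refine hT.isFirstStep_unique ha (hb.of_dist_add_dist_eq hT.connected ?_)
    rw [dist_eq_one_iff_adj.2 hab.symm, h]
  · refine hT.isFirstStep_unique (ha.of_dist_add_dist_eq hT.connected ?_) hb
    rw [dist_eq_one_iff_adj.2 hab, h]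

lemma SimpleGraph.IsTree.isFirstStep_eq_of_walk (hT : G.IsTree) {a b s' : V} (p : G.Walk a b)
    (hp : w ∉ p.support) (ha : IsFirstStep G w a s) (hb : IsFirstStep G w b s') : s = s' := by
  induction p generalizing s with
  | nil => exact hT.isFirstStep_unique ha hb
  | @cons _ y _ hab q ih =>
    rw [Walk.support_cons, List.mem_cons, not_or] at hp
    obtain ⟨s'', hs''⟩ := hT.connected.exists_isFirstStep
      fun h : y = w => hp.2 (h ▸ q.start_mem_support)
    exact (hT.isFirstStep_eq_of_adj hab ha hs'').trans (ih hp.2 hs'' hb)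

lemma SimpleGraph.IsTree.dist_eq_add_of_isFirstStep_ne (hT : G.IsTree) {s' : V}
    (hu : IsFirstStep G w u s) (hv : IsFirstStep G w v s') (hss : s ≠ s') :
    G.dist u v = G.dist u w + G.dist w v := by
  obtain ⟨p, hp⟩ := hT.connected.exists_walk_length_eq_dist u v
  by_cases hw : w ∈ p.support
  · exact (p.dist_add_dist_of_mem_support hp hw).symm
  · exact absurd (hT.isFirstStep_eq_of_walk p hw hu hv) hss

lemma SimpleGraph.IsTree.eq_of_dist_add_dist_eq (hT : G.IsTree)
    (hu : G.dist w u + G.dist u l = G.dist w l) (hv : G.dist w v + G.dist v l = G.dist w l)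
    (huv : G.dist w u = G.dist w v) : u = v := by
  have getVert_eq : ∀ {x} (p : G.Walk w l), p.IsPath →
      G.dist w x + G.dist x l = G.dist w l → p.getVert (G.dist w x) = x := by
    intro x p hp hx
    obtain ⟨q₁, hq₁⟩ := hT.connected.exists_walk_length_eq_dist w x
    obtain ⟨q₂, hq₂⟩ := hT.connected.exists_walk_length_eq_dist x l
    have hq : (q₁.append q₂).IsPath := by
      refine Walk.isPath_of_length_eq_dist _ ?_
      rw [Walk.length_append, hq₁, hq₂, hx]
    rw [(hT.existsUnique_path w l).unique hp hq, ← hq₁, Walk.getVert_append']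
    simp
  obtain ⟨p, hp, -⟩ := hT.connected.exists_path_of_dist w l
  rw [← getVert_eq p hp hu, ← getVert_eq p hp hv, huv]

end Trees

section Leaves

variable {G : SimpleGraph V} {v w s : V}

lemma SimpleGraph.IsTree.exists_isLeaf_dist_add_dist_eq [Finite V] (hT : G.IsTree) (hv : v ≠ w) :
    ∃ l, IsLeaf G l ∧ G.dist w v + G.dist v l = G.dist w l := by
  have hG := hT.connected
  -- a vertex `l` beyond `v` farthest from `w`: each neighbour but its step towards `w` is farther
  obtain ⟨l, hlA, hmax⟩ := Set.exists_max_image {u | G.dist w v + G.dist v u = G.dist w u}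
    (G.dist w) (Set.toFinite _) ⟨v, by simp⟩
  have hlA : G.dist w v + G.dist v l = G.dist w l := hlA
  have hl : l ≠ w := by
    rintro rfl
    have := hG.pos_dist_of_ne hv.symm
    rw [dist_self] at hlA
    omega
  obtain ⟨s, hs⟩ := hG.exists_isFirstStep hl.symm
  refine ⟨l, Set.ncard_eq_one.2 ⟨s, ?_⟩, hlA⟩
  refine Set.eq_singleton_iff_unique_mem.2 ⟨hs.1, fun t ht => ?_⟩
  rcases hT.dist_eq_dist_add_one_of_adj w (G.adj_symm ht) with h | h
  · have farther : G.dist w v + G.dist v t = G.dist w t := by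
      have h₁ : G.dist v t ≤ G.dist v l + G.dist l t := hG.dist_triangle
      have h₂ : G.dist w t ≤ G.dist w v + G.dist v t := hG.dist_triangle
      rw [dist_eq_one_iff_adj.2 ht] at h₁
      omega
    have := hmax t farther
    omega
  · refine hT.isFirstStep_unique ⟨ht, ?_⟩ hs
    rw [dist_comm (u := t), dist_comm (u := l), h]

lemma SimpleGraph.IsTree.exists_isLeaf_isFirstStep [Finite V] (hT : G.IsTree) (hs : G.Adj w s) :
    ∃ l, IsLeaf G l ∧ IsFirstStep G w l s := by
  obtain ⟨l, hl, hsl⟩ := hT.exists_isLeaf_dist_add_dist_eq hs.ne.symm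
  have hss : IsFirstStep G w s s := ⟨hs, by rw [dist_self, zero_add, dist_eq_one_iff_adj.2 hs]⟩
  exact ⟨l, hl, hss.of_dist_add_dist_eq hT.connected hsl⟩

lemma SimpleGraph.ncard_neighborSet_eq_degree [Fintype V] [DecidableRel G.Adj] (v : V) :
    (G.neighborSet v).ncard = G.degree v := by
  rw [Set.ncard_eq_toFinset_card', ← neighborFinset_def, card_neighborFinset_eq_degree]

/-- Counting degrees: `∑ v, deg v = 2 (|V| - 1)`, whereas `deg v ≤ 2 - [v is a leaf]` if no
vertex is major. -/
lemma SimpleGraph.IsTree.exists_isMajor [Fintype V] (hT : G.IsTree) (hl : 2 < numLeaves G) :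
    ∃ w, IsMajor G w := by
  classical
  by_contra! h
  have hdeg : ∀ v, G.degree v + (if IsLeaf G v then 1 else 0) ≤ 2 := by
    intro v
    have hv := h v
    rw [IsMajor, ncard_neighborSet_eq_degree] at hv
    split_ifs with hl
    · rw [IsLeaf, ncard_neighborSet_eq_degree] at hl; omega
    · omega
  have hsum := Finset.sum_le_sum fun v (_ : v ∈ Finset.univ) => hdeg v
  have hleaves : (∑ v, if IsLeaf G v then 1 else 0) = numLeaves G := by
    rw [Finset.sum_boole, Nat.cast_id, numLeaves, ← Set.ncard_coe_finset, Finset.coe_filter_univ]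
  rw [Finset.sum_add_distrib, sum_degrees_eq_twice_card_edges, hleaves] at hsum
  simp only [Finset.sum_const, Finset.card_univ, smul_eq_mul] at hsum
  have := hT.card_edgeFinset
  omega

end Leaves

section Spiders

variable {G : SimpleGraph V} {u v w l l' : V}

lemma SimpleGraph.IsTree.isFirstStep_ne_of_isLeaf [Finite V] (hT : G.IsTree)
    (hw : numLeaves G ≤ (G.neighborSet w).ncard) {s s' : V} (hl : IsLeaf G l)
    (hl' : IsLeaf G l') (hll' : l ≠ l') (hs : IsFirstStep G w l s) (hs' : IsFirstStep G w l' s') :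
    s ≠ s' := by
  have : ∀ t, ∃ l, G.Adj w t → IsLeaf G l ∧ IsFirstStep G w l t := fun t => by
    by_cases ht : G.Adj w t
    · obtain ⟨l, h⟩ := hT.exists_isLeaf_isFirstStep ht
      exact ⟨l, fun _ => h⟩
    · exact ⟨t, fun h => absurd h ht⟩
  choose leaf hleaf using this
  have hinj : Set.InjOn leaf (G.neighborSet w) := fun t ht t' ht' h =>
    hT.isFirstStep_unique (hleaf t ht).2 (h ▸ (hleaf t' ht').2)
  -- each branch at `w` contains a leaf, and there are no more leaves than branches
  have himage : leaf '' G.neighborSet w = {l | IsLeaf G l} :=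
    Set.eq_of_subset_of_ncard_le (by rintro _ ⟨t, ht, rfl⟩; exact (hleaf t ht).1)
      (by rw [hinj.ncard_image]; exact hw)
  obtain ⟨t, ht, rfl⟩ : l ∈ leaf '' G.neighborSet w := himage ▸ hl
  obtain ⟨t', ht', rfl⟩ : l' ∈ leaf '' G.neighborSet w := himage ▸ hl'
  rintro rfl
  exact hll' (congrArg leaf ((hT.isFirstStep_unique hs (hleaf t ht).2).symm.trans
    (hT.isFirstStep_unique hs' (hleaf t' ht').2)))

def IsOnLeg (G : SimpleGraph V) (w l v : V) : Prop :=
  IsLeaf G l ∧ G.dist w v + G.dist v l = G.dist w l ∧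
    ∀ l', IsLeaf G l' → l' ≠ l → G.dist v l' = G.dist v w + G.dist w l'

lemma isOnLeg_self (hl : IsLeaf G l) : IsOnLeg G w l w :=
  ⟨hl, by simp, fun _ _ _ => by simp⟩

lemma SimpleGraph.IsTree.exists_isOnLeg [Finite V] (hT : G.IsTree)
    (hw : numLeaves G ≤ (G.neighborSet w).ncard) (hv : v ≠ w) : ∃ l, IsOnLeg G w l v := by
  obtain ⟨l, hl, hvl⟩ := hT.exists_isLeaf_dist_add_dist_eq hv
  obtain ⟨s, hs⟩ := hT.connected.exists_isFirstStep hv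
  refine ⟨l, hl, hvl, fun l' hl' hl'l => ?_⟩
  by_cases hl'w : l' = w
  · rw [hl'w, dist_self, add_zero]
  obtain ⟨s', hs'⟩ := hT.connected.exists_isFirstStep hl'w
  refine hT.dist_eq_add_of_isFirstStep_ne hs hs' ?_
  exact hT.isFirstStep_ne_of_isLeaf hw hl hl' (Ne.symm hl'l)
    (hs.of_dist_add_dist_eq hT.connected hvl) hs'

lemma IsOnLeg.eq_of_dist_eq (hT : G.IsTree) (hu : IsOnLeg G w l u) (hv : IsOnLeg G w l v)
    (hl' : IsLeaf G l') (hl'l : l' ≠ l) (h : G.dist u l' = G.dist v l') : u = v := by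
  rw [hu.2.2 l' hl' hl'l, hv.2.2 l' hl' hl'l, dist_comm (u := u), dist_comm (u := v)] at h
  exact hT.eq_of_dist_add_dist_eq hu.2.1 hv.2.1 (by omega)

lemma IsOnLeg.eq_of_dist_eq_of_ne (hG : G.Connected) (hu : IsOnLeg G w l u)
    (hv : IsOnLeg G w l' v) (hll' : l ≠ l') (h : G.dist u l = G.dist v l) : u = v := by
  have hu' := hu.2.1
  have hv' := hv.2.2 l hu.1 hll'
  have hwu : w = u := hG.dist_eq_zero_iff.1 (by omega)
  have hvw : v = w := hG.dist_eq_zero_iff.1 (by omega)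
  rw [hvw, hwu]

/-- Two vertices on one leg are told apart by a leaf off that leg, and two vertices on different
legs by the leaf of either leg; with three legs, one of `x`, `y` serves in every case. -/
theorem SimpleGraph.IsTree.isResolvingSet_pair [Finite V] (hT : G.IsTree)
    (hw : numLeaves G ≤ (G.neighborSet w).ncard) {x y z : V}
    (hL : {l | IsLeaf G l} = {x, y, z}) (hxy : x ≠ y) : IsResolvingSet G {x, y} := by
  have isLeaf_iff : ∀ l, IsLeaf G l ↔ l = x ∨ l = y ∨ l = z := fun l => by
    simpa using Set.ext_iff.1 hL l
  have hx : IsLeaf G x := (isLeaf_iff x).2 (Or.inl rfl)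
  have hy : IsLeaf G y := (isLeaf_iff y).2 (Or.inr (Or.inl rfl))
  have leg : ∀ v, ∃ l, IsOnLeg G w l v := fun v => by
    by_cases hv : v = w
    exacts [⟨x, hv ▸ isOnLeg_self hx⟩, hT.exists_isOnLeg hw hv]
  intro u v huv
  obtain ⟨lu, hu⟩ := leg u
  obtain ⟨lv, hv⟩ := leg v
  by_cases hsame : lu = lv
  · subst hsame
    by_cases hlu : lu = x
    · exact hu.eq_of_dist_eq hT hv hy (hlu ▸ hxy.symm) (huv y (by simp))
    · exact hu.eq_of_dist_eq hT hv hx (Ne.symm hlu) (huv x (by simp))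
  · have eq_z : ∀ l, IsLeaf G l → l ∉ ({x, y} : Set V) → l = z := fun l hl hl' =>
      (((isLeaf_iff l).1 hl).resolve_left fun h => hl' (Or.inl h)).resolve_left
        fun h => hl' (Or.inr h)
    by_cases hlu : lu ∈ ({x, y} : Set V)
    · exact hu.eq_of_dist_eq_of_ne hT.connected hv hsame (huv lu hlu)
    · have hlv : lv ∈ ({x, y} : Set V) := by_contra fun h =>
        hsame ((eq_z lu hu.1 hlu).trans (eq_z lv hv.1 h).symm)
      exact (hv.eq_of_dist_eq_of_ne hT.connected hu (Ne.symm hsame) (huv lv hlv).symm).symm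

end Spiders

theorem partitionDim_eq_three_of_three_leaves_general {V : Type*} [Fintype V] (G : SimpleGraph V)
    (hT : G.IsTree) (hl : numLeaves G = 3) :
    partitionDim G = 3 := by
  obtain ⟨w, hw⟩ := hT.exists_isMajor (by omega)
  obtain ⟨x, y, z, hxy, hxz, hyz, hL⟩ := Set.ncard_eq_three.1 hl
  have h3 : ∃ c : V → Fin 3, IsResolvingPartition G c :=
    (hT.isResolvingSet_pair (hl.le.trans hw) hL hxy).exists_isResolvingPartition_fin_three hxy
      hxz.symm hyz.symm
  refine le_antisymm (Nat.sInf_le h3) (le_csInf ⟨3, h3⟩ ?_)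
  rintro t ⟨c, hc⟩
  exact three_le_of_isResolvingPartition hT.connected hw hc

/-- A tree of order at least four with exactly three leaves has partition dimension three. -/
theorem partitionDim_eq_three_of_three_leaves {V : Type*} [Fintype V] (G : SimpleGraph V)
    (hT : G.IsTree) (hV : 4 ≤ Fintype.card V) (hl : numLeaves G = 3) :
    partitionDim G = 3 :=
  partitionDim_eq_three_of_three_leaves_general G hT hl
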